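/- arXiv:2506.03368 — 5 statements merged into one kernel-verified Lean document; each statement's English description precedes it below -/
import Mathlib

section
/- Let X be a second-countable T₁ topological space, let p : X̃ → X be a generalized universal covering, and assume the set N of points of X at which X is not semi-locally simply connected is at most countable. Then the action of the deck transformation group Γ ≅ π₁(X, x₀) on X̃ admits a Borel-measurable fundamental domain, i.e. a Borel set F ⊆ X̃ meeting each Γ-orbit in exactly one point. -/
/-!
Call a point `z` of an open set `U ⊆ X` good for `U` if every loop at `z` inside `U` is
null-homotopic in `X`; good points form a union of path components of `U`. Over such a
component, `p` maps each path component of `p ⁻¹' U` bijectively onto it: onto by path lifting,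
injectively because two lifts of one point joined in `p ⁻¹' U` project to a loop in `U`, which
is null-homotopic, and lifting the null-homotopy closes the lifted loop. Choosing one such sheet
per component gives an open set `G_U` that `p` maps bijectively onto the good points of `U`
lying in `range p`.

Every semi-locally simply connected point is good for some member of a countable basis.
Disjointifying the countably many sets `G_U` therefore gives a Borel set meeting each fibre over
all but countably many points of `range p` exactly once; one point is added over each remaining
point, which is harmless since `X̃` inherits `T₁` from `X`. Fibres of `p` are the `Γ`-orbits.
-/

open Set Topology

/-- `X` is semi-locally simply connected at `x`: some neighbourhood `U` of `x` is such that
every loop at `x` contained in `U` is null-homotopic in `X`. -/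
def SemiLocallySimplyConnectedAt (X : Type*) [TopologicalSpace X] (x : X) : Prop :=
  ∃ U ∈ nhds x, ∀ γ : Path x x, Set.range γ ⊆ U → γ.Homotopic (Path.refl x)

section NullHomotopicLoops

variable {X : Type*} [TopologicalSpace X]

/-- The null-homotopies are taken in `X`, not in `U`. -/
def NullHomotopicLoopsIn (U : Set X) (z : X) : Prop :=
  ∀ γ : Path z z, range γ ⊆ U → γ.Homotopic (Path.refl z)

theorem NullHomotopicLoopsIn.mono {U V : Set X} {z : X} (h : NullHomotopicLoopsIn U z)
    (hVU : V ⊆ U) : NullHomotopicLoopsIn V z :=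
  fun γ hγ => h γ (hγ.trans hVU)

/-- A loop `γ` at `z'` is conjugate, by a path `q` from `z` to `z'` in `U`, to the loop
`q ⬝ γ ⬝ q⁻¹` at `z`, which also lies in `U`. -/
theorem NullHomotopicLoopsIn.of_joinedIn {U : Set X} {z z' : X} (h : NullHomotopicLoopsIn U z)
    (hzz' : JoinedIn U z z') : NullHomotopicLoopsIn U z' := by
  intro γ hγ
  set q := hzz'.somePath
  have hq : range q ⊆ U := range_subset_iff.2 hzz'.somePath_mem
  have hconj : ((q.trans γ).trans q.symm).Homotopic (Path.refl z) := h _ <| by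
    simp only [Path.trans_range, Path.symm_range]
    exact union_subset (union_subset hq hγ) hq
  rw [← Path.Homotopic.Quotient.eq, Path.Homotopic.Quotient.mk_trans,
    Path.Homotopic.Quotient.mk_trans, Path.Homotopic.Quotient.mk_symm,
    Path.Homotopic.Quotient.mk_refl] at hconj
  rw [← Path.Homotopic.Quotient.eq, Path.Homotopic.Quotient.mk_refl]
  set Q := Path.Homotopic.Quotient.mk q
  calc Path.Homotopic.Quotient.mk γ
      = Q.symm.trans (((Q.trans (.mk γ)).trans Q.symm).trans Q) := by
        simp [← Path.Homotopic.Quotient.trans_assoc Q.symm]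
    _ = .refl z' := by simp [hconj]

theorem SemiLocallySimplyConnectedAt.exists_mem_basis {b : Set (Set X)}
    (hb : TopologicalSpace.IsTopologicalBasis b) {z : X} (h : SemiLocallySimplyConnectedAt X z) :
    ∃ V ∈ b, z ∈ V ∧ NullHomotopicLoopsIn V z := by
  obtain ⟨U, hU, hnull⟩ := h
  obtain ⟨V, hVb, hzV, hVU⟩ := hb.mem_nhds_iff.1 hU
  exact ⟨V, hVb, hzV, NullHomotopicLoopsIn.mono hnull hVU⟩

theorem JoinedIn.map_preimage {E : Type*} [TopologicalSpace E] {p : E → X} (hp : Continuous p)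
    {U : Set X} {a b : E} (h : JoinedIn (p ⁻¹' U) a b) : JoinedIn U (p a) (p b) :=
  (h.map hp).mono (image_preimage_subset p U)

theorem isOpen_preimage_setOf_nullHomotopicLoopsIn {E : Type*} [TopologicalSpace E]
    [LocallyPathConnectedSpace E] {p : E → X} (hp : Continuous p) {U : Set X} (hU : IsOpen U) :
    IsOpen (p ⁻¹' {z ∈ U | NullHomotopicLoopsIn U z}) := by
  refine isOpen_iff_forall_mem_open.2 fun x ⟨hxU, hx⟩ => ⟨pathComponentIn (p ⁻¹' U) x,
    fun y hy => ?_, (hU.preimage hp).pathComponentIn x, mem_pathComponentIn_self hxU⟩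
  have hxy : JoinedIn U (p x) (p y) := hy.map_preimage hp
  exact ⟨hxy.target_mem, hx.of_joinedIn hxy⟩

end NullHomotopicLoops

def HasUniqueLiftsOfSimplyConnected {E X : Type*} [TopologicalSpace E] [TopologicalSpace X]
    (p : E → X) : Prop :=
  ∀ (Y : Type) [TopologicalSpace Y] [SimplyConnectedSpace Y] [LocallyPathConnectedSpace Y]
    (y : Y) (f : Y → X), Continuous f → ∀ e : E, p e = f y →
      ∃! g : Y → E, Continuous g ∧ g y = e ∧ p ∘ g = f

namespace HasUniqueLiftsOfSimplyConnected

variable {E X : Type*} [TopologicalSpace E] [TopologicalSpace X] {p : E → X}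

theorem eq_of_comp_eq (hl : HasUniqueLiftsOfSimplyConnected p) {Y : Type} [TopologicalSpace Y]
    [SimplyConnectedSpace Y] [LocallyPathConnectedSpace Y] {f : Y → X} (hf : Continuous f)
    {g₁ g₂ : Y → E} (hg₁ : Continuous g₁) (hg₂ : Continuous g₂) (hpg₁ : p ∘ g₁ = f)
    (hpg₂ : p ∘ g₂ = f) {y : Y} (hy : g₁ y = g₂ y) : g₁ = g₂ :=
  (hl Y y f hf (g₁ y) (congrFun hpg₁ y)).unique ⟨hg₁, rfl, hpg₁⟩ ⟨hg₂, hy.symm, hpg₂⟩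

theorem apply_eq_of_forall_apply_eq (hl : HasUniqueLiftsOfSimplyConnected p) {Y : Type}
    [TopologicalSpace Y] [SimplyConnectedSpace Y] [LocallyPathConnectedSpace Y] {g : Y → E}
    (hg : Continuous g) {z : X} (hpg : ∀ y, p (g y) = z) (y y' : Y) : g y' = g y :=
  congrFun (hl.eq_of_comp_eq continuous_const hg continuous_const (funext hpg)
    (funext fun _ => hpg y) rfl) y'

/-- Lift the null-homotopy of `γ`, extended to the plane, starting at `a`. On three sides of
the square the homotopy is constant, hence so is its lift; on the fourth side the lift is `β`. -/
theorem eq_of_homotopic_refl (hl : HasUniqueLiftsOfSimplyConnected p) {z : X} {γ : Path z z}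
    (hγ : γ.Homotopic (Path.refl z)) {a b : E} (β : Path a b) (hβ : ∀ t, p (β t) = γ t) :
    b = a := by
  obtain ⟨K⟩ := hγ
  let π : ℝ → unitInterval := projIcc 0 1 zero_le_one
  have hπ : Continuous π := continuous_projIcc
  let f : ℝ × ℝ → X := fun w => K (π w.1, π w.2)
  have hf : Continuous f := by fun_prop
  have ha : p a = f (0, 0) := by simpa [f, π] using hβ 0
  obtain ⟨g, ⟨hg, hg0, hpg⟩, -⟩ := hl (ℝ × ℝ) (0, 0) f hf a ha
  have hpg' : ∀ u v, p (g (u, v)) = K (π u, π v) := fun u v => congrFun hpg (u, v)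
  have bottom : g (1, 0) = g (0, 0) :=
    hl.apply_eq_of_forall_apply_eq (g := fun u => g (u, 0)) (by fun_prop) (z := z)
      (fun u => by simp [hpg', π]) 0 1
  have right : g (1, 1) = g (1, 0) :=
    hl.apply_eq_of_forall_apply_eq (g := fun v => g (1, v)) (by fun_prop) (z := z)
      (fun v => by simp [hpg', π]) 0 1
  have top : g (0, 1) = g (1, 1) :=
    hl.apply_eq_of_forall_apply_eq (g := fun u => g (u, 1)) (by fun_prop) (z := z)
      (fun u => by simp [hpg', π]) 1 0
  have left : (fun v => g (0, v)) = β.extend :=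
    hl.eq_of_comp_eq γ.continuous_extend (by fun_prop) β.continuous_extend
      (funext fun v => by simp [hpg', π, Path.extend, IccExtend])
      (funext fun v => by simp [hβ, Path.extend, IccExtend]) (y := 0) (by simp [hg0])
  calc b = g (0, 1) := by simpa using (congrFun left 1).symm
    _ = a := by rw [top, right, bottom, hg0]

theorem t1Space (hl : HasUniqueLiftsOfSimplyConnected p) [T1Space X] (hp : Continuous p) :
    T1Space E := by
  refine t1Space_iff_specializes_imp_eq.2 fun x y hxy => ?_
  obtain ⟨β, hβ⟩ := hxy.joinedIn (F := {x, y}) (by simp) (by simp)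
  have hpxy : p x = p y := (hxy.map hp).eq
  refine (hl.eq_of_homotopic_refl (Path.Homotopic.refl (Path.refl (p x))) β fun t => ?_).symm
  rcases hβ t with h | h <;> simp_all

theorem exists_joinedIn_lift (hl : HasUniqueLiftsOfSimplyConnected p) {U : Set X} {z₀ z₁ : X}
    (h : JoinedIn U z₀ z₁) {a : E} (ha : p a = z₀) :
    ∃ b, p b = z₁ ∧ JoinedIn (p ⁻¹' U) a b := by
  obtain ⟨L, hL⟩ := h
  obtain ⟨g, ⟨hg, hg0, hpg⟩, -⟩ := hl ℝ 0 L.extend L.continuous_extend a (by simp [ha])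
  have hpg' : ∀ t : unitInterval, p (g t) = L t := fun t => by simpa using congrFun hpg t
  exact ⟨g 1, by simpa using hpg' 1,
    ⟨⟨⟨fun t => g t, by fun_prop⟩, hg0, rfl⟩, fun t => by simpa [hpg'] using hL t⟩⟩

theorem eq_of_joinedIn_preimage (hl : HasUniqueLiftsOfSimplyConnected p) (hp : Continuous p)
    {U : Set X} {a b : E} (hU : NullHomotopicLoopsIn U (p a)) (hab : p b = p a)
    (h : JoinedIn (p ⁻¹' U) a b) : b = a := by
  obtain ⟨β, hβ⟩ := h
  exact hl.eq_of_homotopic_refl (γ := (β.map hp).cast rfl hab.symm)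
    (hU _ (range_subset_iff.2 hβ)) β fun _ => rfl

theorem bijOn_pathComponentIn (hl : HasUniqueLiftsOfSimplyConnected p) (hp : Continuous p)
    {U : Set X} {x : E} (hU : NullHomotopicLoopsIn U (p x)) :
    BijOn p (pathComponentIn (p ⁻¹' U) x) (pathComponentIn U (p x)) := by
  refine ⟨fun y hy => hy.map_preimage hp, fun y₁ hy₁ y₂ hy₂ hy => ?_, fun z hz => ?_⟩
  · exact (hl.eq_of_joinedIn_preimage hp (hU.of_joinedIn (hy₁.map_preimage hp)) hy.symm
      ((hy₁ : JoinedIn _ x y₁).symm.trans hy₂)).symm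
  · obtain ⟨y, rfl, hy⟩ := hl.exists_joinedIn_lift (hz : JoinedIn U (p x) z) rfl
    exact ⟨y, hy, rfl⟩

theorem exists_isOpen_bijOn (hl : HasUniqueLiftsOfSimplyConnected p)
    [LocallyPathConnectedSpace E] (hp : Continuous p) {U : Set X} (hU : IsOpen U) :
    ∃ G : Set E, IsOpen G ∧ BijOn p G ({z ∈ U | NullHomotopicLoopsIn U z} ∩ range p) := by
  set A := {z ∈ U | NullHomotopicLoopsIn U z}
  let c : E → Set X := fun x => pathComponentIn U (p x)
  -- `r x` is a point of `E`, chosen once for each path component of `U`, lying over `c x`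
  let r : E → E := fun x => (Quotient.mk (Setoid.ker c) x).out
  have hrc : ∀ x, c (r x) = c x := fun x => Quotient.mk_out (s := Setoid.ker c) x
  have hr : ∀ x x', c x = c x' → r x = r x' := fun x x' h =>
    congrArg Quotient.out (Quotient.sound h)
  have hcA : ∀ x ∈ p ⁻¹' A, c x ⊆ A := fun x hx z hz =>
    ⟨pathComponentIn_subset hz, hx.2.of_joinedIn hz⟩
  have hpiece : ∀ x : p ⁻¹' A, BijOn p (pathComponentIn (p ⁻¹' U) (r x)) (c x) := by
    rintro ⟨x, hx⟩
    have hxr : p x ∈ c (r x) := hrc x ▸ mem_pathComponentIn_self hx.1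
    rw [← hrc x]
    exact hl.bijOn_pathComponentIn hp (hcA x hx (hxr : JoinedIn U _ _).symm).2
  have htarget : A ∩ range p = ⋃ x : p ⁻¹' A, c x := by
    refine Subset.antisymm ?_ (iUnion_subset fun x => subset_inter (hcA x x.2) ?_)
    · rintro _ ⟨hzA, x, rfl⟩
      exact mem_iUnion.2 ⟨⟨x, hzA⟩, mem_pathComponentIn_self hzA.1⟩
    · exact (hpiece x).surjOn.trans (image_subset_range p _)
  refine ⟨⋃ x : p ⁻¹' A, pathComponentIn (p ⁻¹' U) (r x),
    isOpen_iUnion fun x => (hU.preimage hp).pathComponentIn _, htarget ▸ bijOn_iUnion hpiece ?_⟩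
  intro y₁ hy₁ y₂ hy₂ hy
  obtain ⟨x₁, hy₁⟩ := mem_iUnion.1 hy₁
  obtain ⟨x₂, hy₂⟩ := mem_iUnion.1 hy₂
  have hc : c x₁ = c x₂ := calc
    c x₁ = pathComponentIn U (p y₁) := (pathComponentIn_congr ((hpiece x₁).mapsTo hy₁)).symm
    _ = c x₂ := hy ▸ pathComponentIn_congr ((hpiece x₂).mapsTo hy₂)
  rw [hr _ _ hc] at hy₁
  exact (hpiece x₂).injOn hy₁ hy₂ hy

end HasUniqueLiftsOfSimplyConnected

theorem Set.BijOn.union_of_disjoint {α β : Type*} {f : α → β} {s₁ s₂ : Set α} {t₁ t₂ : Set β}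
    (h₁ : BijOn f s₁ t₁) (h₂ : BijOn f s₂ t₂) (ht : Disjoint t₁ t₂) :
    BijOn f (s₁ ∪ s₂) (t₁ ∪ t₂) :=
  h₁.union h₂ <| (injOn_union ((ht.preimage f).mono h₁.mapsTo h₂.mapsTo)).2
    ⟨h₁.injOn, h₂.injOn, fun _ hx _ hy => ht.ne_of_mem (h₁.mapsTo hx) (h₂.mapsTo hy)⟩

section MeasurableCrossSection

variable {α β : Type*} [MeasurableSpace α] {p : α → β}

theorem exists_measurableSet_bijOn_iUnion {B : ℕ → Set β} {G : ℕ → Set α}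
    (hB : ∀ n, MeasurableSet (p ⁻¹' B n)) (hG : ∀ n, MeasurableSet (G n))
    (hGB : ∀ n, BijOn p (G n) (B n)) : ∃ F, MeasurableSet F ∧ BijOn p F (⋃ n, B n) := by
  have hD : ∀ n, MeasurableSet (p ⁻¹' disjointed B n) := fun n => by
    rw [disjointed_eq_inter_compl]
    simp only [preimage_inter, preimage_iInter, preimage_compl]
    exact (hB n).inter (.iInter fun k => .iInter fun _ => (hB k).compl)
  have hpiece : ∀ n, BijOn p (G n ∩ p ⁻¹' disjointed B n) (disjointed B n) := fun n => by
    simpa [inter_eq_right.2 (disjointed_subset B n)] using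
      (hGB n).inter_mapsTo (mapsTo_preimage p (disjointed B n)) inter_subset_right
  refine ⟨⋃ n, G n ∩ p ⁻¹' disjointed B n, .iUnion fun n => (hG n).inter (hD n), ?_⟩
  rw [← iUnion_disjointed (f := B)]
  refine bijOn_iUnion hpiece fun x hx y hy hxy => ?_
  obtain ⟨i, hxi⟩ := mem_iUnion.1 hx
  obtain ⟨j, hyj⟩ := mem_iUnion.1 hy
  obtain rfl : i = j := by
    by_contra hij
    exact (disjoint_disjointed B hij).ne_of_mem hxi.2 hyj.2 hxy
  exact (hGB i).injOn hxi.1 hyj.1 hxy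

theorem exists_measurableSet_bijOn_of_countable [MeasurableSingletonClass α] {R : Set β}
    (hR : R.Countable) (hRp : R ⊆ range p) : ∃ F, MeasurableSet F ∧ BijOn p F R := by
  obtain ⟨F, -, hF⟩ := exists_subset_bijOn (p ⁻¹' R) p
  rw [image_preimage_eq_of_subset hRp] at hF
  exact ⟨F, (hF.mapsTo.countable_of_injOn hF.injOn hR).measurableSet, hF⟩

theorem exists_measurableSet_bijOn_range [MeasurableSingletonClass α] {B : ℕ → Set β}
    {G : ℕ → Set α} (hB : ∀ n, MeasurableSet (p ⁻¹' B n)) (hG : ∀ n, MeasurableSet (G n))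
    (hGB : ∀ n, BijOn p (G n) (B n)) (hc : (range p \ ⋃ n, B n).Countable) :
    ∃ F, MeasurableSet F ∧ BijOn p F (range p) := by
  obtain ⟨F₁, hF₁m, hF₁⟩ := exists_measurableSet_bijOn_iUnion hB hG hGB
  obtain ⟨F₂, hF₂m, hF₂⟩ := exists_measurableSet_bijOn_of_countable hc sdiff_subset
  have hrange : (⋃ n, B n) ∪ (range p \ ⋃ n, B n) = range p :=
    union_sdiff_cancel (hF₁.image_eq ▸ image_subset_range p F₁)
  exact ⟨F₁ ∪ F₂, hF₁m.union hF₂m, hrange ▸ hF₁.union_of_disjoint hF₂ disjoint_sdiff_right⟩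

end MeasurableCrossSection

theorem existsUnique_smul_mem_of_bijOn_range {Γ E X : Type*} [SMul Γ E] {p : E → X}
    (hdeck : ∀ (γ : Γ) (x : E), p (γ • x) = p x)
    (hfib : ∀ x y : E, p x = p y → ∃! γ : Γ, γ • x = y) {F : Set E} (hF : BijOn p F (range p))
    (x : E) : ∃! γ : Γ, γ • x ∈ F := by
  obtain ⟨y, hyF, hy⟩ := hF.surjOn (mem_range_self x)
  obtain ⟨γ, rfl, hγ⟩ := hfib x y hy.symm
  exact ⟨γ, hyF, fun γ' h' => hγ γ' (hF.injOn h' hyF (by rw [hdeck, hdeck]))⟩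

theorem exists_borel_fundamental_domain_general
    (X : Type) [TopologicalSpace X] [SecondCountableTopology X] [T1Space X]
    (hN : {x : X | ¬ SemiLocallySimplyConnectedAt X x}.Countable)
    (Xt : Type) [TopologicalSpace Xt] [MeasurableSpace Xt] [BorelSpace Xt]
    [LocallyPathConnectedSpace Xt]
    (p : Xt → X) (hp : Continuous p)
    (hlift : ∀ (Y : Type) [TopologicalSpace Y] [PathConnectedSpace Y]
      [LocallyPathConnectedSpace Y] (y : Y) (f : Y → X) (hf : Continuous f),
      (∀ γ : Path y y, (γ.map hf).Homotopic (Path.refl (f y))) →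
      ∀ xt : Xt, p xt = f y →
        ∃! g : Y → Xt, Continuous g ∧ g y = xt ∧ p ∘ g = f)
    (Γ : Type) [Group Γ] [MulAction Γ Xt]
    (hdeck : ∀ (γ : Γ) (x : Xt), p (γ • x) = p x)
    (hfib : ∀ x y : Xt, p x = p y → ∃! γ : Γ, γ • x = y) :
    ∃ F : Set Xt, MeasurableSet F ∧ ∀ x : Xt, ∃! γ : Γ, γ • x ∈ F := by
  have hl : HasUniqueLiftsOfSimplyConnected p := fun Y _ _ _ y f hf =>
    hlift Y y f hf fun γ => (SimplyConnectedSpace.paths_homotopic γ (.refl y)).map ⟨f, hf⟩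
  have : T1Space Xt := hl.t1Space hp
  obtain ⟨e, he⟩ := TopologicalSpace.exists_seq_basis (α := X)
  have he_open : ∀ n, IsOpen (e n) := fun n => he.isOpen (mem_range_self n)
  choose G hG_open hG using fun n => hl.exists_isOpen_bijOn hp (he_open n)
  have hc : (range p \ ⋃ n, {z ∈ e n | NullHomotopicLoopsIn (e n) z} ∩ range p).Countable := by
    refine hN.mono fun z ⟨⟨x, hx⟩, hzB⟩ => ?_
    intro hz
    obtain ⟨_, ⟨n, rfl⟩, hzn, hnull⟩ := SemiLocallySimplyConnectedAt.exists_mem_basis he hz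
    exact hzB (mem_iUnion.2 ⟨n, ⟨hzn, hnull⟩, x, hx⟩)
  obtain ⟨F, hFm, hF⟩ := exists_measurableSet_bijOn_range
    (fun n => by
      rw [preimage_inter_range]
      exact (isOpen_preimage_setOf_nullHomotopicLoopsIn hp (he_open n)).measurableSet)
    (fun n => (hG_open n).measurableSet) hG hc
  exact ⟨F, hFm, existsUnique_smul_mem_of_bijOn_range hdeck hfib hF⟩

/-- Let `X` be a second-countable `T₁` space whose set of points at which it
fails to be semi-locally simply connected is at most countable, and let `p : X̃ → X` be a
generalized universal covering (in the sense of Fischer–Zastrow: `X̃` is simply connected and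
locally path-connected, `p` is a continuous surjection with unique lifting of maps from
path-connected, locally path-connected spaces with trivial image of `π₁`).  If `Γ` is the
deck transformation group (acting over `p`, freely and transitively on each fibre), then the
action of `Γ` on `X̃` admits a Borel-measurable fundamental domain: a Borel set `F ⊆ X̃`
meeting each `Γ`-orbit in exactly one point. -/
theorem exists_borel_fundamental_domain
    (X : Type) [TopologicalSpace X] [SecondCountableTopology X] [T1Space X]
    (hN : {x : X | ¬ SemiLocallySimplyConnectedAt X x}.Countable)
    (Xt : Type) [TopologicalSpace Xt] [MeasurableSpace Xt] [BorelSpace Xt]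
    [SimplyConnectedSpace Xt] [LocallyPathConnectedSpace Xt]
    (p : Xt → X) (hp : Continuous p) (hsurj : Function.Surjective p)
    (hlift : ∀ (Y : Type) [TopologicalSpace Y] [PathConnectedSpace Y]
      [LocallyPathConnectedSpace Y] (y : Y) (f : Y → X) (hf : Continuous f),
      (∀ γ : Path y y, (γ.map hf).Homotopic (Path.refl (f y))) →
      ∀ xt : Xt, p xt = f y →
        ∃! g : Y → Xt, Continuous g ∧ g y = xt ∧ p ∘ g = f)
    (Γ : Type) [Group Γ] [MulAction Γ Xt]
    (hdeck : ∀ (γ : Γ) (x : Xt), p (γ • x) = p x)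
    (hfib : ∀ x y : Xt, p x = p y → ∃! γ : Γ, γ • x = y) :
    ∃ F : Set Xt, MeasurableSet F ∧ ∀ x : Xt, ∃! γ : Γ, γ • x ∈ F :=
  exists_borel_fundamental_domain_general X hN Xt p hp hlift Γ hdeck hfib
end

section
/- Let G be a group and V a Banach space. The G-module B(G,V) of bounded functions f : G → V, with norm sup_{g}‖f(g)‖ and action (h·f)(g) = f(gh), is relatively injective: for any injective G-morphism i : V₁ → V₂ of Banach G-modules admitting a (not necessarily equivariant) bounded linear left inverse σ with ‖σ‖ ≤ 1, and any G-morphism α : V₁ → B(G,V), there exists a G-morphism β : V₂ → B(G,V) with β ∘ i = α and ‖β‖ ≤ ‖α‖. -/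
/-!
An equivariant `α : V₁ → B(G,V)` is determined by the single functional `v ↦ α v 1`, since
`α v x = α (x • v) 1`. Conversely every bounded functional `T` on a normed `G`-module `W`
induces the equivariant orbit map `v ↦ (x ↦ T (x • v))` of norm at most `‖T‖`. Extending `α`
therefore amounts to extending the functional `v ↦ α v 1` from `V₁` to `V₂`, which `σ` does
without increasing the norm.
-/

open BoundedContinuousFunction

variable {𝕜 : Type*} [NontriviallyNormedField 𝕜] {G : Type*}
  {V : Type*} [NormedAddCommGroup V] [NormedSpace 𝕜 V]
  {W : Type*} [NormedAddCommGroup W] [NormedSpace 𝕜 W]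

theorem ContinuousLinearMap.norm_apply_smul_le [SMul G W] (T : W →L[𝕜] V)
    (hnorm : ∀ (g : G) (v : W), ‖g • v‖ ≤ ‖v‖) (v : W) (x : G) :
    ‖T (x • v)‖ ≤ ‖T‖ * ‖v‖ :=
  (T.le_opNorm _).trans (mul_le_mul_of_nonneg_left (hnorm x v) (norm_nonneg _))

namespace BoundedContinuousFunction

theorem norm_evalCLM_le {X : Type*} [TopologicalSpace X] (x : X) :
    ‖evalCLM 𝕜 (β := V) x‖ ≤ 1 :=
  ContinuousLinearMap.opNorm_le_bound _ zero_le_one fun f => by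
    simpa using (f : X →ᵇ V).norm_coe_le_norm x

variable [Monoid G] [TopologicalSpace G]

theorem apply_eq_apply_smul_one {U : Type*} [SMul G U] {α : U → G →ᵇ V}
    (hα : ∀ (g : G) (v : U) (x : G), α (g • v) x = α v (x * g)) (v : U) (x : G) :
    α v x = α (x • v) 1 := by
  rw [hα, one_mul]

variable [DiscreteTopology G] [DistribMulAction G W] (T : W →L[𝕜] V)
  (hlin : ∀ (g : G) (c : 𝕜) (v : W), g • (c • v) = c • (g • v))
  (hnorm : ∀ (g : G) (v : W), ‖g • v‖ ≤ ‖v‖)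

noncomputable def orbitCLM : W →L[𝕜] (G →ᵇ V) :=
  LinearMap.mkContinuous
    { toFun := fun v => ofNormedAddCommGroupDiscrete (fun x => T (x • v)) _
        (T.norm_apply_smul_le hnorm v)
      map_add' := fun u w => by ext x; simp [ofNormedAddCommGroupDiscrete, smul_add]
      map_smul' := fun c u => by ext x; simp [ofNormedAddCommGroupDiscrete, hlin] }
    ‖T‖ fun v => norm_ofNormedAddCommGroup_le _
      (mul_nonneg (norm_nonneg _) (norm_nonneg _)) (T.norm_apply_smul_le hnorm v)

@[simp]
theorem orbitCLM_apply (v : W) (x : G) : orbitCLM T hlin hnorm v x = T (x • v) := rfl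

theorem orbitCLM_smul_apply (g : G) (v : W) (x : G) :
    orbitCLM T hlin hnorm (g • v) x = orbitCLM T hlin hnorm v (x * g) := by
  simp [mul_smul]

theorem norm_orbitCLM_le : ‖orbitCLM T hlin hnorm‖ ≤ ‖T‖ :=
  LinearMap.mkContinuous_norm_le _ (norm_nonneg _) _

end BoundedContinuousFunction

theorem boundedFunctions_relatively_injective_general
    (G : Type) [Group G] [TopologicalSpace G] [DiscreteTopology G]
    (V : Type) [NormedAddCommGroup V] [NormedSpace ℝ V]
    (V₁ : Type) [NormedAddCommGroup V₁] [NormedSpace ℝ V₁]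
    (V₂ : Type) [NormedAddCommGroup V₂] [NormedSpace ℝ V₂]
    [DistribMulAction G V₁] [DistribMulAction G V₂]
    (h₂lin : ∀ (g : G) (c : ℝ) (v : V₂), g • (c • v) = c • (g • v))
    (h₂norm : ∀ (g : G) (v : V₂), ‖g • v‖ ≤ ‖v‖)
    (i : V₁ →L[ℝ] V₂)
    (hiequiv : ∀ (g : G) (v : V₁), i (g • v) = g • i v)
    (σ : V₂ →L[ℝ] V₁) (hσi : ∀ v : V₁, σ (i v) = v) (hσ : ‖σ‖ ≤ 1)
    (α : V₁ →L[ℝ] BoundedContinuousFunction G V)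
    (hαequiv : ∀ (g : G) (v : V₁) (x : G), α (g • v) x = α v (x * g)) :
    ∃ β : V₂ →L[ℝ] BoundedContinuousFunction G V,
      (∀ (g : G) (v : V₂) (x : G), β (g • v) x = β v (x * g)) ∧
      (∀ v : V₁, β (i v) = α v) ∧ ‖β‖ ≤ ‖α‖ := by
  let T : V₂ →L[ℝ] V := (evalCLM ℝ 1).comp (α.comp σ)
  have hT : ‖T‖ ≤ ‖α‖ :=
    calc ‖T‖ ≤ ‖evalCLM ℝ (β := V) (1 : G)‖ * (‖α‖ * ‖σ‖) :=
          (ContinuousLinearMap.opNorm_comp_le _ _).trans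
            (mul_le_mul_of_nonneg_left (α.opNorm_comp_le σ) (norm_nonneg _))
      _ ≤ 1 * (‖α‖ * 1) := by gcongr; exact norm_evalCLM_le 1
      _ = ‖α‖ := by ring
  refine ⟨orbitCLM T h₂lin h₂norm, orbitCLM_smul_apply T h₂lin h₂norm, fun v => ?_,
    (norm_orbitCLM_le T h₂lin h₂norm).trans hT⟩
  ext x
  rw [orbitCLM_apply, apply_eq_apply_smul_one hαequiv v x, ← hiequiv]
  simp [T, hσi]

/-- **Ivanov.** For a group `G` and a Banach space `V`, the Banach `G`-module
`B(G,V)` of bounded functions `G → V` (sup norm, action `(h·f)(g) = f(g*h)`) is relatively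
injective: given Banach `G`-modules `V₁, V₂` (norm-nonincreasing linear actions), an
injective `G`-morphism `i : V₁ → V₂` admitting a (not necessarily equivariant) bounded
linear left inverse `σ` with `‖σ‖ ≤ 1`, and a `G`-morphism `α : V₁ → B(G,V)`, there is a
`G`-morphism `β : V₂ → B(G,V)` with `β ∘ i = α` and `‖β‖ ≤ ‖α‖`. -/
theorem boundedFunctions_relatively_injective
    (G : Type) [Group G] [TopologicalSpace G] [DiscreteTopology G]
    (V : Type) [NormedAddCommGroup V] [NormedSpace ℝ V] [CompleteSpace V]
    (V₁ : Type) [NormedAddCommGroup V₁] [NormedSpace ℝ V₁] [CompleteSpace V₁]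
    (V₂ : Type) [NormedAddCommGroup V₂] [NormedSpace ℝ V₂] [CompleteSpace V₂]
    [DistribMulAction G V₁] [DistribMulAction G V₂]
    (h₁lin : ∀ (g : G) (c : ℝ) (v : V₁), g • (c • v) = c • (g • v))
    (h₂lin : ∀ (g : G) (c : ℝ) (v : V₂), g • (c • v) = c • (g • v))
    (h₁norm : ∀ (g : G) (v : V₁), ‖g • v‖ ≤ ‖v‖)
    (h₂norm : ∀ (g : G) (v : V₂), ‖g • v‖ ≤ ‖v‖)
    (i : V₁ →L[ℝ] V₂) (hi : Function.Injective i)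
    (hiequiv : ∀ (g : G) (v : V₁), i (g • v) = g • i v)
    (σ : V₂ →L[ℝ] V₁) (hσi : ∀ v : V₁, σ (i v) = v) (hσ : ‖σ‖ ≤ 1)
    (α : V₁ →L[ℝ] BoundedContinuousFunction G V)
    (hαequiv : ∀ (g : G) (v : V₁) (x : G), α (g • v) x = α v (x * g)) :
    ∃ β : V₂ →L[ℝ] BoundedContinuousFunction G V,
      (∀ (g : G) (v : V₂) (x : G), β (g • v) x = β v (x * g)) ∧
      (∀ v : V₁, β (i v) = α v) ∧ ‖β‖ ≤ ‖α‖ :=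
  boundedFunctions_relatively_injective_general G V V₁ V₂ h₂lin h₂norm i hiequiv σ hσi hσ α hαequiv
end

section
/- Let p : X̃ → X be a generalized universal covering with X̃ contractible, and G its deck transformation group. Then the augmented complex 0 → ℝ → 𝓒_b^0(X̃) → 𝓒_b^1(X̃) → ⋯ of bounded Borel-measurable cochains on X̃, with the standard coboundary, is a strong resolution of the trivial G-module ℝ: there exist linear contracting homotopies κ^i : 𝓒_b^i(X̃) → 𝓒_b^{i−1}(X̃) with ‖κ^i‖ ≤ 1, δ_{i−1}κ^i + κ^{i+1}δ_i = id for all i ≥ 0, and κ^0 δ_{−1} = id. -/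
open scoped Classical

open SimplexCategory CategoryTheory

noncomputable def Del (n : ℕ) : TopCat := SimplexCategory.toTop₀.obj (SimplexCategory.mk n)

noncomputable def face {X : TopCat} {n : ℕ} (j : Fin (n + 2)) (σ : C(Del (n+1), X)) :
    C(Del n, X) :=
  σ.comp (SimplexCategory.toTop₀.map (SimplexCategory.δ j)).hom

noncomputable def vert {n : ℕ} (j : Fin (n + 1)) : Del n :=
  ⟨fun i => if i = j then 1 else 0, by
    refine ⟨fun i => ?_, ?_⟩
    · dsimp only
      split_ifs <;> norm_num
    · simp [Finset.sum_ite_eq']⟩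

noncomputable def bdry (X : TopCat) (n : ℕ) (c : C(Del (n+1), X) →₀ ℝ) :
    C(Del n, X) →₀ ℝ :=
  ∑ j : Fin (n + 2), ((-1 : ℝ) ^ (j : ℕ)) • Finsupp.mapDomain (face j) c

/-- Borel measurability of a cochain, with respect to the Borel σ-algebra of the
compact-open topology on the space of singular simplices. -/
def Mbl (Y : TopCat) (n : ℕ) (f : C(Del n, Y) → ℝ) : Prop :=
  @Measurable _ _ (borel C(Del n, Y)) _ f

/-- The simplicial coboundary operator on (measurable bounded) cochains. -/
noncomputable def cobd (Y : TopCat) (n : ℕ) (f : C(Del n, Y) → ℝ) :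
    C(Del (n + 1), Y) → ℝ :=
  fun σ => ∑ j : Fin (n + 2), ((-1 : ℝ) ^ (j : ℕ)) * f (face j σ)

/-!
Contract `X̃` to a point `x₀` by a homotopy `H`. Coning a singular simplex `σ : Δⁿ → X̃` off to `x₀`
along `H` gives an `(n+1)`-simplex `cone H σ` whose `0`-th face is `σ` and whose `(j+1)`-st face is
the cone on the `j`-th face of `σ`; dually, `κ f := f ∘ cone H` satisfies `δκ + κδ = id`. Since `κ`
evaluates `f` on single simplices it is linear of norm `≤ 1`, and it preserves Borel measurability
because `σ ↦ cone H σ` is continuous for the compact-open topologies.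
-/

instance (n : ℕ) : LocallyCompactSpace (Del n) :=
  inferInstanceAs (LocallyCompactSpace (stdSimplex ℝ (Fin (n + 1))))

namespace Del

lemma ext {n : ℕ} {x y : Del n} (h : ∀ i : Fin (n + 1), x.1 i = y.1 i) : x = y :=
  Subtype.ext (funext h)

noncomputable def coface {n : ℕ} (j : Fin (n + 2)) : Del n → Del (n + 1) :=
  (toTop₀.map (δ j)).hom

lemma coface_coe {n : ℕ} (j : Fin (n + 2)) (t : Del n) :
    (coface j t).1 = FunOnFinite.linearMap ℝ ℝ j.succAbove t.1 := rfl

lemma coface_apply_succAbove {n : ℕ} (j : Fin (n + 2)) (t : Del n) (m : Fin (n + 1)) :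
    (coface j t).1 (j.succAbove m) = t.1 m := by
  rw [coface_coe, FunOnFinite.linearMap_apply_apply, Finset.sum_eq_single m]
  · intro k hk hkm
    exact absurd (Fin.succAbove_right_injective (Finset.mem_filter.1 hk).2) hkm
  · simp

lemma coface_apply_self {n : ℕ} (j : Fin (n + 2)) (t : Del n) : (coface j t).1 j = 0 := by
  rw [coface_coe, FunOnFinite.linearMap_apply_apply, Finset.sum_eq_zero]
  intro k hk
  exact absurd (Finset.mem_filter.1 hk).2 (Fin.succAbove_ne j k)

lemma coface_succ_apply_zero {n : ℕ} (j : Fin (n + 1)) (x : Del n) :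
    (coface j.succ x).1 0 = x.1 0 := by
  rw [← coface_apply_succAbove j.succ x 0, Fin.succ_succAbove_zero]

/-- Where `t 0 ≤ 1/2` this is the radial projection from vertex `0` onto the opposite face;
elsewhere the missing mass is put on vertex `0` of that face, which makes the map continuous on
all of `Δⁿ⁺¹`. The cone below is constant near the apex, so only the first regime matters. -/
noncomputable def toFaceZero {n : ℕ} (t : Del (n + 1)) : Del n :=
  ⟨fun i => t.1 i.succ / max (1 - t.1 0) 2⁻¹ +
      if i = 0 then 1 - (1 - t.1 0) / max (1 - t.1 0) 2⁻¹ else 0, by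
    have hm : 0 < max (1 - t.1 0) 2⁻¹ := lt_max_of_lt_right (by norm_num)
    have hle : (1 - t.1 0) / max (1 - t.1 0) 2⁻¹ ≤ 1 := div_le_one_of_le₀ (le_max_left _ _) hm.le
    refine ⟨fun i => add_nonneg (div_nonneg (t.2.1 _) hm.le) ?_, ?_⟩
    · split_ifs <;> linarith
    · have ht := t.2.2
      rw [Fin.sum_univ_succ] at ht
      rw [Finset.sum_add_distrib, ← Finset.sum_div, Finset.sum_ite_eq']
      simp only [Finset.mem_univ, if_true]
      rw [show ∑ i : Fin (n + 1), t.1 i.succ = 1 - t.1 0 by linarith]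
      ring⟩

lemma continuous_toFaceZero {n : ℕ} : Continuous (toFaceZero (n := n)) := by
  have hcoord : ∀ i, Continuous fun t : Del (n + 1) => t.1 i :=
    fun i => (continuous_apply i).comp continuous_subtype_val
  have hm : Continuous fun t : Del (n + 1) => max (1 - t.1 0) 2⁻¹ :=
    (continuous_const.sub (hcoord 0)).max continuous_const
  have hm0 : ∀ t : Del (n + 1), max (1 - t.1 0) 2⁻¹ ≠ 0 :=
    fun t => (lt_max_of_lt_right (by norm_num)).ne'
  refine Continuous.subtype_mk (continuous_pi fun i => ?_) _
  refine ((hcoord _).div hm hm0).add ?_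
  split_ifs
  · exact continuous_const.sub ((continuous_const.sub (hcoord 0)).div hm hm0)
  · exact continuous_const

lemma toFaceZero_apply_of_le {n : ℕ} (t : Del (n + 1)) (ht : t.1 0 ≤ 2⁻¹) (i : Fin (n + 1)) :
    (toFaceZero t).1 i = t.1 i.succ / (1 - t.1 0) := by
  have hm : max (1 - t.1 0) 2⁻¹ = 1 - t.1 0 := max_eq_left (by linarith)
  have hpos : 1 - t.1 0 ≠ 0 := by linarith
  show t.1 i.succ / max (1 - t.1 0) 2⁻¹ + _ = _
  rw [hm, div_self hpos, sub_self, ite_self, add_zero]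

lemma toFaceZero_coface_zero {n : ℕ} (x : Del n) : toFaceZero (coface 0 x) = x := by
  refine Del.ext fun i => ?_
  rw [toFaceZero_apply_of_le _ (by rw [coface_apply_self]; norm_num), coface_apply_self,
    sub_zero, div_one, ← Fin.zero_succAbove, coface_apply_succAbove]

lemma toFaceZero_coface_succ {n : ℕ} (j : Fin (n + 2)) (x : Del (n + 1)) (hx : x.1 0 ≤ 2⁻¹) :
    toFaceZero (coface j.succ x) = coface j (toFaceZero x) := by
  refine Del.ext fun i => ?_
  rw [toFaceZero_apply_of_le _ (by rwa [coface_succ_apply_zero]), coface_succ_apply_zero]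
  rcases Fin.eq_self_or_eq_succAbove j i with rfl | ⟨k, rfl⟩
  · rw [coface_apply_self, coface_apply_self, zero_div]
  · rw [← Fin.succ_succAbove_succ, coface_apply_succAbove, coface_apply_succAbove,
      toFaceZero_apply_of_le _ hx]

noncomputable def apexTime {n : ℕ} (t : Del (n + 1)) : unitInterval :=
  Set.projIcc 0 1 zero_le_one (2 * t.1 0)

lemma continuous_apexTime {n : ℕ} : Continuous (apexTime (n := n)) :=
  continuous_projIcc.comp
    (continuous_const.mul ((continuous_apply 0).comp continuous_subtype_val))

lemma apexTime_of_eq_zero {n : ℕ} {t : Del (n + 1)} (ht : t.1 0 = 0) : apexTime t = 0 := by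
  rw [apexTime, ht, mul_zero, Set.projIcc_left]
  rfl

lemma apexTime_of_le {n : ℕ} {t : Del (n + 1)} (ht : 2⁻¹ ≤ t.1 0) : apexTime t = 1 := by
  rw [apexTime, Set.projIcc_of_right_le]
  · rfl
  · linarith

end Del

lemma face_apply {X : TopCat} {n : ℕ} (j : Fin (n + 2)) (σ : C(Del (n + 1), X)) (x : Del n) :
    face j σ x = σ (Del.coface j x) := rfl

lemma Mbl.comp_continuous {Y : TopCat} {m n : ℕ} {f : C(Del m, Y) → ℝ} (hf : Mbl Y m f)
    {L : C(Del n, Y) → C(Del m, Y)} (hL : Continuous L) : Mbl Y n (f ∘ L) := by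
  borelize C(Del m, Y) C(Del n, Y)
  exact hf.comp hL.measurable

section Cone

open Del

variable {X : TopCat} {x₀ : X} (H : ContinuousMap.Homotopy (ContinuousMap.id X) (.const X x₀))

/-- `H` runs at double speed along the cone, so `cone H σ` is constant `x₀` where `t 0 ≥ 1/2`. -/
noncomputable def cone {n : ℕ} (σ : C(Del n, X)) : C(Del (n + 1), X) :=
  ⟨fun t => H (apexTime t, σ (toFaceZero t)),
    H.continuous.comp (continuous_apexTime.prodMk (σ.continuous.comp continuous_toFaceZero))⟩

lemma cone_apply {n : ℕ} (σ : C(Del n, X)) (t : Del (n + 1)) :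
    cone H σ t = H (apexTime t, σ (toFaceZero t)) := rfl

lemma continuous_cone {n : ℕ} : Continuous (cone H (n := n)) :=
  ContinuousMap.continuous_of_continuous_uncurry _ <| H.continuous.comp <|
    (continuous_apexTime.comp continuous_snd).prodMk <|
      continuous_eval.comp (continuous_fst.prodMk (continuous_toFaceZero.comp continuous_snd))

lemma face_zero_cone {n : ℕ} (σ : C(Del n, X)) : face 0 (cone H σ) = σ := by
  ext x
  rw [face_apply, cone_apply, apexTime_of_eq_zero (coface_apply_self 0 x), H.apply_zero,
    toFaceZero_coface_zero]
  rfl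

lemma face_succ_cone {n : ℕ} (j : Fin (n + 2)) (σ : C(Del (n + 1), X)) :
    face j.succ (cone H σ) = cone H (face j σ) := by
  ext x
  rw [face_apply, cone_apply, cone_apply, face_apply, apexTime, coface_succ_apply_zero,
    ← apexTime]
  rcases le_or_gt (x.1 0) 2⁻¹ with hx | hx
  · rw [toFaceZero_coface_succ j x hx]
  · rw [apexTime_of_le hx.le, H.apply_one, H.apply_one]
    rfl

lemma face_one_cone (σ : C(Del 0, X)) : face 1 (cone H σ) = .const (Del 0) x₀ := by
  ext x
  have hx : (coface 1 x).1 0 = 1 := by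
    rw [← Fin.succ_zero_eq_one, coface_succ_apply_zero]
    simpa using x.2.2
  rw [face_apply, cone_apply, apexTime_of_le (by rw [hx]; norm_num), H.apply_one]
  rfl

lemma apply_const_add_cobd_cone (f : C(Del 0, X) → ℝ) (σ : C(Del 0, X)) :
    f (.const (Del 0) x₀) + cobd X 0 f (cone H σ) = f σ := by
  rw [cobd, Fin.sum_univ_two, face_zero_cone, face_one_cone]
  norm_num

lemma cobd_comp_cone_add_cobd_cone {i : ℕ} (f : C(Del (i + 1), X) → ℝ)
    (σ : C(Del (i + 1), X)) :
    cobd X i (f ∘ cone H) σ + cobd X (i + 1) f (cone H σ) = f σ := by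
  simp only [cobd, Function.comp_apply, Fin.sum_univ_succ (n := i + 2), face_zero_cone,
    face_succ_cone, Fin.val_zero, Fin.val_succ, pow_zero, pow_succ]
  simp only [mul_neg_one, neg_mul, one_mul, Finset.sum_neg_distrib]
  ring

end Cone

theorem measurable_bounded_cochains_strong_resolution_general
    (Xt : TopCat) [ContractibleSpace Xt] :
    ∃ (κ : ∀ i : ℕ, (C(Del (i + 1), Xt) → ℝ) → (C(Del i, Xt) → ℝ))
      (κ0 : (C(Del 0, Xt) → ℝ) → ℝ),
      -- linearity
      (∀ i f g, κ i (f + g) = κ i f + κ i g) ∧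
      (∀ i (c : ℝ) f, κ i (c • f) = c • κ i f) ∧
      (∀ f g, κ0 (f + g) = κ0 f + κ0 g) ∧ (∀ (c : ℝ) f, κ0 (c • f) = c * κ0 f) ∧
      -- the homotopies preserve Borel measurability
      (∀ i f, Mbl Xt (i + 1) f → Mbl Xt i (κ i f)) ∧
      -- norm at most one
      (∀ i f (C : ℝ), (∀ σ, |f σ| ≤ C) → ∀ σ, |κ i f σ| ≤ C) ∧
      (∀ f (C : ℝ), (∀ σ, |f σ| ≤ C) → |κ0 f| ≤ C) ∧
      -- κ⁰ ∘ δ₋₁ = id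
      (∀ r : ℝ, κ0 (fun _ => r) = r) ∧
      -- δ₋₁ κ⁰ + κ¹ δ₀ = id
      (∀ (f : C(Del 0, Xt) → ℝ) σ, κ0 f + κ 0 (cobd Xt 0 f) σ = f σ) ∧
      -- δ_{i-1} κ^i + κ^{i+1} δ_i = id for i ≥ 1
      (∀ (i : ℕ) (f : C(Del (i + 1), Xt) → ℝ) σ,
        cobd Xt i (κ i f) σ + κ (i + 1) (cobd Xt (i + 1) f) σ = f σ) := by
  obtain ⟨x₀, ⟨H⟩⟩ := id_nullhomotopic Xt
  exact ⟨fun _ f => f ∘ cone H, fun f => f (.const _ x₀),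
    fun _ _ _ => rfl, fun _ _ _ => rfl, fun _ _ => rfl, fun _ _ => rfl,
    fun _ _ hf => hf.comp_continuous (continuous_cone H),
    fun _ _ _ hC _ => hC _, fun _ _ hC => hC _, fun _ => rfl,
    apply_const_add_cobd_cone H, fun _ => cobd_comp_cone_add_cobd_cone H⟩

/-- Let `p : X̃ → X` be a generalized universal covering with `X̃`
contractible and `G` its deck group.  Then the augmented complex
`0 → ℝ → 𝓒_b^0(X̃) → 𝓒_b^1(X̃) → ⋯` of bounded Borel-measurable cochains on `X̃` is a strong
resolution of the trivial `G`-module `ℝ`: there are linear contracting homotopies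
`κ⁰, κⁱ` of norm ≤ 1 (preserving measurability and bounds) with `κ⁰ ∘ δ₋₁ = id`,
`δ₋₁ κ⁰ + κ¹ δ₀ = id` and `δ_{i-1} κ^i + κ^{i+1} δ_i = id`. -/
theorem measurable_bounded_cochains_strong_resolution
    (X Xt : TopCat) [ContractibleSpace Xt]
    [SimplyConnectedSpace Xt] [LocallyPathConnectedSpace Xt]
    (p : C(Xt, X)) (hsurj : Function.Surjective p)
    (G : Type) [Group G] [MulAction G Xt]
    (hact : ∀ g : G, Continuous (fun x : Xt => g • x))
    (hdeck : ∀ (g : G) (x : Xt), p (g • x) = p x)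
    (hfib : ∀ x y : Xt, p x = p y → ∃! g : G, g • x = y) :
    ∃ (κ : ∀ i : ℕ, (C(Del (i + 1), Xt) → ℝ) → (C(Del i, Xt) → ℝ))
      (κ0 : (C(Del 0, Xt) → ℝ) → ℝ),
      -- linearity
      (∀ i f g, κ i (f + g) = κ i f + κ i g) ∧
      (∀ i (c : ℝ) f, κ i (c • f) = c • κ i f) ∧
      (∀ f g, κ0 (f + g) = κ0 f + κ0 g) ∧ (∀ (c : ℝ) f, κ0 (c • f) = c * κ0 f) ∧
      -- the homotopies preserve Borel measurability
      (∀ i f, Mbl Xt (i + 1) f → Mbl Xt i (κ i f)) ∧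
      -- norm at most one
      (∀ i f (C : ℝ), (∀ σ, |f σ| ≤ C) → ∀ σ, |κ i f σ| ≤ C) ∧
      (∀ f (C : ℝ), (∀ σ, |f σ| ≤ C) → |κ0 f| ≤ C) ∧
      -- κ⁰ ∘ δ₋₁ = id
      (∀ r : ℝ, κ0 (fun _ => r) = r) ∧
      -- δ₋₁ κ⁰ + κ¹ δ₀ = id
      (∀ (f : C(Del 0, Xt) → ℝ) σ, κ0 f + κ 0 (cobd Xt 0 f) σ = f σ) ∧
      -- δ_{i-1} κ^i + κ^{i+1} δ_i = id for i ≥ 1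
      (∀ (i : ℕ) (f : C(Del (i + 1), Xt) → ℝ) σ,
        cobd Xt i (κ i f) σ + κ (i + 1) (cobd Xt (i + 1) f) σ = f σ) :=
  measurable_bounded_cochains_strong_resolution_general Xt
end

section
/- Let X be a metric space written as X = Y_∞ ∪ ⋃_{n∈ℕ} Y_n (a convergent Y-space): each Y_n is homeomorphic to Y_∞ via f_n : Y_∞ → Y_n, there is a finite set of 'identification points' y with f_n(y) = y for all n, the images f_n(y), f_m(y') are pairwise distinct otherwise, and dist(f_n(y), y) → 0 uniformly in y. Assume Y_∞ is a finite (hence compact) CW-complex. Then each identification point P has a relatively open neighbourhood U = U' ∪ ⋃_n f_n(U') in X (where U' is a deformation-retractible neighbourhood of P in Y_∞) that deformation retracts onto {P} within X, with the retraction defined layerwise by r_t(x) = f_i(r'_t(f_i^{-1}(x))) for x ∈ f_i(U'). -/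
/-!
All layers are parametrised by one map `layerMap f : OnePoint ℕ × Y∞ → X`, `(k, y) ↦ f k y`
with `f ∞ = id`. Uniform convergence `f n → id` makes it continuous; its domain is compact, so
it is a proper surjection, hence a quotient map, and so is its product with the time interval.
Its fibres are points except over the identification points, so `U` pulls back to the open set
`OnePoint ℕ × U'`, and the homotopy `(k, y, t) ↦ f k (r' y t)` upstairs is constant on fibres
because `r'` fixes `p`; it therefore descends to a continuous deformation retraction of `U`.
-/

open Set Filter Topology Function OnePoint

theorem IsProperMap.continuousOn_of_comp {A B C : Type*} [TopologicalSpace A]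
    [TopologicalSpace B] [TopologicalSpace C] {q : A → B} (hq : IsProperMap q) {S : Set B}
    (hS : S ⊆ range q) {g : B → C} (hg : ContinuousOn (g ∘ q) (q ⁻¹' S)) :
    ContinuousOn g S := by
  have hsurj : Surjective (S.restrictPreimage q) := fun ⟨y, hy⟩ => by
    obtain ⟨x, rfl⟩ := hS hy
    exact ⟨⟨x, hy⟩, rfl⟩
  have hquot : IsQuotientMap (S.restrictPreimage q) :=
    (hq.restrictPreimage S).isClosedMap.isQuotientMap (hq.restrictPreimage S).continuous hsurj
  rw [continuousOn_iff_continuous_domRestrict] at hg ⊢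
  exact hquot.continuous_iff.mpr hg

section LayerMap

variable {X : Type*} (f : ℕ → X → X)

def layerMap (a : OnePoint ℕ × X) : X := a.1.elim a.2 (f · a.2)

@[simp] lemma layerMap_infty (x : X) : layerMap f (∞, x) = x := rfl

@[simp] lemma layerMap_coe (n : ℕ) (x : X) : layerMap f (n, x) = f n x := rfl

variable {f} in
lemma layerMap_of_isFixedPt {x : X} (hx : ∀ n, IsFixedPt (f n) x) (k : OnePoint ℕ) :
    layerMap f (k, x) = x := by
  induction k using OnePoint.rec with
  | infty => rfl
  | coe n => exact hx n

lemma layerMap_image_univ_prod (S : Set X) :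
    layerMap f '' (univ ×ˢ S) = S ∪ ⋃ n, f n '' S := by
  ext x
  simp only [mem_image, mem_prod, mem_univ, true_and, Prod.exists, OnePoint.exists,
    layerMap_infty, layerMap_coe, mem_union, mem_iUnion, exists_eq_right]

lemma continuousOn_layerMap [PseudoMetricSpace X] {K : Set X} (hf : ∀ n, ContinuousOn (f n) K)
    (hu : TendstoUniformlyOn f id atTop K) : ContinuousOn (layerMap f) (univ ×ˢ K) := by
  rintro ⟨k, y⟩ ⟨-, hy⟩
  induction k using OnePoint.rec with
  | infty =>
    rw [ContinuousWithinAt, Metric.tendsto_nhds]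
    intro ε hε
    have hlayer :
        ∀ᶠ k in 𝓝 (∞ : OnePoint ℕ), ∀ x ∈ K, dist (layerMap f (k, x)) x < ε / 2 := by
      rw [nhds_infty_eq, eventually_sup, eventually_map, coclosedCompact_eq_cocompact,
        cocompact_eq_atTop]
      refine ⟨(Metric.tendstoUniformlyOn_iff.mp hu _ (half_pos hε)).mono
        fun n hn x hx => ?_, by simp [hε]⟩
      rw [dist_comm]
      exact hn x hx
    have hnear : ∀ᶠ x in 𝓝[K] y, x ∈ K ∧ dist x y < ε / 2 :=
      eventually_mem_nhdsWithin.and (nhdsWithin_le_nhds (Metric.ball_mem_nhds y (half_pos hε)))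
    rw [nhdsWithin_prod_eq, nhdsWithin_univ]
    filter_upwards [hlayer.prod_mk hnear] with ⟨k, x⟩ ⟨hk, hxK, hxy⟩
    calc dist (layerMap f (k, x)) (layerMap f (∞, y))
        ≤ dist (layerMap f (k, x)) x + dist x y := dist_triangle _ _ _
      _ < ε / 2 + ε / 2 := add_lt_add (hk x hxK) hxy
      _ = ε := add_halves ε
  | coe n =>
    have hopen : IsOpen ({(n : OnePoint ℕ)} ×ˢ univ : Set (OnePoint ℕ × X)) := by
      refine IsOpen.prod ?_ isOpen_univ
      rw [← image_singleton]
      exact isOpen_image_coe.mpr (isOpen_discrete _)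
    have heq : layerMap f =ᶠ[𝓝[univ ×ˢ K] ((n : OnePoint ℕ), y)] f n ∘ Prod.snd := by
      filter_upwards [nhdsWithin_le_nhds (hopen.mem_nhds ⟨rfl, trivial⟩)]
      rintro ⟨k, x⟩ ⟨rfl, -⟩
      rfl
    exact ((hf n y hy).comp continuousWithinAt_snd fun a ha => ha.2).congr_of_eventuallyEq
      heq rfl

def layerMapOn (K : Set X) (a : OnePoint ℕ × K) : X := layerMap f (a.1, a.2)

def LayersGluedAlong (K P : Set X) : Prop :=
  ∀ ⦃a b : OnePoint ℕ × X⦄, a.2 ∈ K → b.2 ∈ K → layerMap f a = layerMap f b →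
    a.2 = b.2 ∧ (a.1 = b.1 ∨ a.2 ∈ P)

/-- Over a point of `U` this picks some preimage `(k, y)` with `y ∈ U'`; which one does not matter,
see `LayersGluedAlong.layerwiseHomotopy_layerMap`. -/
noncomputable def layerwiseHomotopy [Nonempty X] {T : Type*} (U' : Set X) (r' : X → T → X)
    (x : X) (t : T) : X :=
  let a := invFunOn (layerMap f) (univ ×ˢ U') x
  layerMap f (a.1, r' a.2 t)

section Fibres

variable {f} {K P : Set X} (hfix : ∀ n, ∀ x ∈ P, IsFixedPt (f n) x)
  (hdisj1 : ∀ n, ∀ x ∈ K, x ∉ P → ∀ y ∈ K, f n x ≠ y)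
include hfix hdisj1

lemma mem_and_eq_of_apply_eq {n : ℕ} {x y : X} (hx : x ∈ K) (hy : y ∈ K) (h : f n x = y) :
    x ∈ P ∧ y = x := by
  by_cases hxP : x ∈ P
  · exact ⟨hxP, h ▸ hfix n x hxP⟩
  · exact absurd h (hdisj1 n x hx hxP y hy)

variable (hinj : ∀ n, InjOn (f n) K)
  (hdisj2 : ∀ n m, n ≠ m → ∀ x ∈ K, x ∉ P → ∀ y ∈ K, f n x ≠ f m y)
include hinj hdisj2

lemma layersGluedAlong : LayersGluedAlong f K P := by
  rintro ⟨k, x⟩ ⟨l, y⟩ ha hb h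
  induction k using OnePoint.rec with
  | infty =>
    induction l using OnePoint.rec with
    | infty => exact ⟨h, Or.inl rfl⟩
    | coe m =>
      obtain ⟨hyP, hxy⟩ := mem_and_eq_of_apply_eq hfix hdisj1 hb ha h.symm
      exact ⟨hxy, Or.inr (hxy ▸ hyP)⟩
  | coe n =>
    induction l using OnePoint.rec with
    | infty =>
      obtain ⟨hxP, hyx⟩ := mem_and_eq_of_apply_eq hfix hdisj1 ha hb h
      exact ⟨hyx.symm, Or.inr hxP⟩
    | coe m =>
      by_cases hnm : n = m
      · subst hnm
        exact ⟨hinj n ha hb h, Or.inl rfl⟩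
      · have hxP : x ∈ P := by
          by_contra hxP
          exact hdisj2 n m hnm x ha hxP y hb h
        obtain ⟨-, hxy⟩ :=
          mem_and_eq_of_apply_eq hfix hdisj1 hb ha ((hfix n x hxP).symm.trans h).symm
        exact ⟨hxy, Or.inr hxP⟩

end Fibres

variable {f} {K P : Set X}

lemma LayersGluedAlong.layerMap_mem_image_iff (hglue : LayersGluedAlong f K P) {U' : Set X}
    (hU'K : U' ⊆ K) {a : OnePoint ℕ × X} (ha : a.2 ∈ K) :
    layerMap f a ∈ layerMap f '' (univ ×ˢ U') ↔ a.2 ∈ U' := by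
  refine ⟨?_, fun h => ⟨a, ⟨trivial, h⟩, rfl⟩⟩
  rintro ⟨b, ⟨-, hb⟩, hab⟩
  exact (hglue (hU'K hb) ha hab).1 ▸ hb

lemma LayersGluedAlong.layerwiseHomotopy_layerMap [Nonempty X] {T : Type*}
    (hglue : LayersGluedAlong f K P) {U' : Set X} (hU'K : U' ⊆ K) {p : X}
    (hU'P : P ∩ U' ⊆ {p}) (hp : ∀ n, IsFixedPt (f n) p) {r' : X → T → X} {t : T}
    (hr'p : r' p t = p) {a : OnePoint ℕ × X} (ha : a.2 ∈ U') :
    layerwiseHomotopy f U' r' (layerMap f a) t = layerMap f (a.1, r' a.2 t) := by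
  have hex : ∃ b ∈ univ ×ˢ U', layerMap f b = layerMap f a := ⟨a, ⟨trivial, ha⟩, rfl⟩
  set b := invFunOn (layerMap f) (univ ×ˢ U') (layerMap f a)
  have hb : b ∈ univ ×ˢ U' := invFunOn_mem hex
  obtain ⟨hba, hb1 | hbP⟩ := hglue (hU'K hb.2) (hU'K ha) (invFunOn_eq hex)
  · change layerMap f (b.1, r' b.2 t) = _
    rw [hb1, hba]
  · have hbp : b.2 = p := hU'P ⟨hbP, hb.2⟩
    change layerMap f (b.1, r' b.2 t) = _
    rw [← hba, hbp, hr'p, layerMap_of_isFixedPt hp, layerMap_of_isFixedPt hp]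

lemma surjective_layerMapOn (hcover : layerMap f '' (univ ×ˢ K) = univ) :
    Surjective (layerMapOn f K) := by
  intro x
  obtain ⟨a, ⟨-, ha⟩, rfl⟩ := hcover.symm ▸ mem_univ x
  exact ⟨(a.1, ⟨a.2, ha⟩), rfl⟩

section Topology

variable [TopologicalSpace X] [T2Space X]

lemma isProperMap_layerMapOn (hK : IsCompact K) (hc : ContinuousOn (layerMap f) (univ ×ˢ K)) :
    IsProperMap (layerMapOn f K) := by
  have := isCompact_iff_compactSpace.mp hK
  exact Continuous.isProperMap <| hc.comp_continuous (by fun_prop) fun a => ⟨trivial, a.2.2⟩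

variable (hK : IsCompact K) (hc : ContinuousOn (layerMap f) (univ ×ˢ K))
  (hcover : layerMap f '' (univ ×ˢ K) = univ) (hglue : LayersGluedAlong f K P)
  {U' : Set X} (hU'K : U' ⊆ K)
include hK hc hcover hglue hU'K

lemma isOpen_layerMap_image (hU' : IsOpen ((↑) ⁻¹' U' : Set K)) :
    IsOpen (layerMap f '' (univ ×ˢ U')) := by
  have hq := isProperMap_layerMapOn hK hc
  rw [← (hq.isClosedMap.isQuotientMap hq.continuous
    (surjective_layerMapOn hcover)).isOpen_preimage]
  convert continuous_snd.isOpen_preimage _ hU' using 1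
  ext a
  exact hglue.layerMap_mem_image_iff hU'K a.2.2

lemma continuousOn_layerwiseHomotopy [Nonempty X] {T : Type*} [TopologicalSpace T] {I : Set T}
    {p : X} (hU'P : P ∩ U' ⊆ {p}) (hp : ∀ n, IsFixedPt (f n) p) {r' : X → T → X}
    (hr'cont : ContinuousOn (uncurry r') (U' ×ˢ I))
    (hr'into : ∀ x ∈ U', ∀ t ∈ I, r' x t ∈ U') (hr'p : ∀ t ∈ I, r' p t = p) :
    ContinuousOn (uncurry (layerwiseHomotopy f U' r')) ((layerMap f '' (univ ×ˢ U')) ×ˢ I) := by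
  have hq := (isProperMap_layerMapOn hK hc).prodMap (isProperMap_id (X := T))
  refine hq.continuousOn_of_comp (fun z _ => ?_) ?_
  · obtain ⟨a, ha⟩ := surjective_layerMapOn hcover z.1
    exact ⟨(a, z.2), Prod.ext ha rfl⟩
  have hmem : ∀ z ∈ Prod.map (layerMapOn f K) id ⁻¹'
      ((layerMap f '' (univ ×ˢ U')) ×ˢ I), (z.1.2 : X) ∈ U' ∧ z.2 ∈ I := fun z hz =>
    ⟨(hglue.layerMap_mem_image_iff hU'K z.1.2.2).mp hz.1, hz.2⟩
  refine ContinuousOn.congr (f := fun z => layerMap f (z.1.1, r' z.1.2 z.2)) ?_ fun z hz => ?_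
  · have hr'comp : ContinuousOn (fun z : (OnePoint ℕ × K) × T => r' z.1.2 z.2) _ :=
      hr'cont.comp (f := fun z : (OnePoint ℕ × K) × T => ((z.1.2 : X), z.2)) (by fun_prop)
        fun z hz => hmem z hz
    exact hc.comp ((continuous_fst.comp continuous_fst).continuousOn.prodMk hr'comp)
      fun z hz => ⟨trivial, hU'K (hr'into _ (hmem z hz).1 _ (hmem z hz).2)⟩
  · exact hglue.layerwiseHomotopy_layerMap hU'K hU'P hp (hr'p _ (hmem z hz).2) (hmem z hz).1

end Topology

end LayerMap

theorem convergentYSpace_identification_point_retractible_nbhd_general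
    (X : Type) [MetricSpace X]
    (Yinf : Set X) (Y : ℕ → Set X)
    (hcover : Yinf ∪ (⋃ n, Y n) = univ)
    (hYinfCompact : IsCompact Yinf)
    (f : ℕ → X → X)
    (hmaps : ∀ n, Set.BijOn (f n) Yinf (Y n))
    (hembed : ∀ n, Topology.IsEmbedding (Yinf.restrict (f n)))
    (P : Finset X) (hP : (P : Set X) ⊆ Yinf)
    (hfixP : ∀ (n : ℕ) (x : X), x ∈ Yinf → (f n x = x ↔ x ∈ P))
    (hdisj1 : ∀ (n : ℕ) (x : X), x ∈ Yinf → x ∉ (P : Set X) →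
      ∀ y ∈ Yinf, f n x ≠ y)
    (hdisj2 : ∀ (n m : ℕ), n ≠ m → ∀ x ∈ Yinf, x ∉ (P : Set X) →
      ∀ y ∈ Yinf, f n x ≠ f m y)
    (hunif : ∀ ε : ℝ, 0 < ε → ∃ N : ℕ, ∀ n ≥ N, ∀ x ∈ Yinf, dist (f n x) x < ε)
    (p : X) (hpP : p ∈ P)
    (U' : Set X) (hU'sub : U' ⊆ Yinf) (hpU' : p ∈ U')
    (hU'open : ∃ V : Set X, IsOpen V ∧ U' = V ∩ Yinf)
    (hU'P : (P : Set X) ∩ U' = {p})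
    (r' : X → ℝ → X)
    (hr'cont : ContinuousOn (fun q : X × ℝ => r' q.1 q.2) (U' ×ˢ Icc (0:ℝ) 1))
    (hr'into : ∀ x ∈ U', ∀ t ∈ Icc (0:ℝ) 1, r' x t ∈ U')
    (hr'one : ∀ x ∈ U', r' x 1 = x)
    (hr'zero : ∀ x ∈ U', r' x 0 = p)
    (hr'p : ∀ t ∈ Icc (0:ℝ) 1, r' p t = p) :
    p ∈ U' ∪ ⋃ n, f n '' U' ∧
    IsOpen (U' ∪ ⋃ n, f n '' U') ∧
    ∃ r : X → ℝ → X,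
      ContinuousOn (fun q : X × ℝ => r q.1 q.2) ((U' ∪ ⋃ n, f n '' U') ×ˢ Icc (0:ℝ) 1) ∧
      (∀ x ∈ U' ∪ ⋃ n, f n '' U', ∀ t ∈ Icc (0:ℝ) 1, r x t ∈ U' ∪ ⋃ n, f n '' U') ∧
      (∀ x ∈ U' ∪ ⋃ n, f n '' U', r x 1 = x) ∧
      (∀ x ∈ U' ∪ ⋃ n, f n '' U', r x 0 = p) ∧
      (∀ x ∈ U', ∀ t ∈ Icc (0:ℝ) 1, r x t = r' x t) ∧
      (∀ (n : ℕ), ∀ x ∈ U', ∀ t ∈ Icc (0:ℝ) 1, r (f n x) t = f n (r' x t)) := by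
  have : Nonempty X := ⟨p⟩
  have hglue : LayersGluedAlong f Yinf P := layersGluedAlong
    (fun n x hx => (hfixP n x (hP hx)).mpr hx) hdisj1 (fun n => (hmaps n).injOn) hdisj2
  have hp : ∀ n, IsFixedPt (f n) p := fun n => (hfixP n p (hP hpP)).mpr hpP
  have hunif' : TendstoUniformlyOn f id atTop Yinf := by
    refine Metric.tendstoUniformlyOn_iff.mpr fun ε hε => ?_
    obtain ⟨N, hN⟩ := hunif ε hε
    exact eventually_atTop.mpr ⟨N, fun n hn x hx => (dist_comm _ _).trans_lt (hN n hn x hx)⟩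
  have hc : ContinuousOn (layerMap f) (univ ×ˢ Yinf) := continuousOn_layerMap f
    (fun n => continuousOn_iff_continuous_domRestrict.mpr (hembed n).continuous) hunif'
  have hcover' : layerMap f '' (univ ×ˢ Yinf) = univ := by
    simp_rw [layerMap_image_univ_prod, (hmaps _).image_eq, hcover]
  have hU'open' : IsOpen ((↑) ⁻¹' U' : Set Yinf) := by
    obtain ⟨V, hV, rfl⟩ := hU'open
    simpa using hV.preimage continuous_subtype_val
  have hr : ∀ a : OnePoint ℕ × X, a.2 ∈ U' → ∀ t ∈ Icc (0 : ℝ) 1,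
      layerwiseHomotopy f U' r' (layerMap f a) t = layerMap f (a.1, r' a.2 t) := fun a ha t ht =>
    hglue.layerwiseHomotopy_layerMap hU'sub hU'P.le hp (hr'p t ht) ha
  rw [← layerMap_image_univ_prod]
  refine ⟨⟨(∞, p), ⟨trivial, hpU'⟩, rfl⟩,
    isOpen_layerMap_image hYinfCompact hc hcover' hglue hU'sub hU'open', layerwiseHomotopy f U' r',
    continuousOn_layerwiseHomotopy hYinfCompact hc hcover' hglue hU'sub hU'P.le hp hr'cont hr'into
      hr'p, ?_, ?_, ?_, fun x hx t ht => hr (∞, x) hx t ht,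
    fun n x hx t ht => hr (n, x) hx t ht⟩
  · rintro _ ⟨a, ⟨-, ha⟩, rfl⟩ t ht
    rw [hr a ha t ht]
    exact ⟨(a.1, _), ⟨trivial, hr'into _ ha t ht⟩, rfl⟩
  · rintro _ ⟨a, ⟨-, ha⟩, rfl⟩
    rw [hr a ha 1 (right_mem_Icc.mpr zero_le_one), hr'one _ ha]
  · rintro _ ⟨a, ⟨-, ha⟩, rfl⟩
    rw [hr a ha 0 (left_mem_Icc.mpr zero_le_one), hr'zero _ ha, layerMap_of_isFixedPt hp]

/-- Let `X = Y∞ ∪ ⋃ₙ Yₙ` be a convergent `Y`-space: each `Yₙ` is the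
homeomorphic image of `Y∞` under `f n` (fixing exactly the finite set `P` of identification
points, otherwise disjoint from `Y∞` and from the other layers), with `f n → id` uniformly,
and `Y∞` compact (a finite CW-complex).  Given an identification point `p ∈ P` and a strong
deformation-retractible neighbourhood `U'` of `p` in `Y∞` (containing no other
identification point), the set `U = U' ∪ ⋃ₙ f n '' U'` is an open neighbourhood of `p` in
`X` which deformation retracts onto `{p}`, the retraction being defined layerwise by
`r t (f n x) = f n (r' t x)`. -/
theorem convergentYSpace_identification_point_retractible_nbhd
    (X : Type) [MetricSpace X]
    (Yinf : Set X) (Y : ℕ → Set X)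
    (hcover : Yinf ∪ (⋃ n, Y n) = univ)
    (hYinfCompact : IsCompact Yinf) (hYinfClosed : IsClosed Yinf)
    (f : ℕ → X → X)
    (hmaps : ∀ n, Set.BijOn (f n) Yinf (Y n))
    (hembed : ∀ n, Topology.IsEmbedding (Yinf.restrict (f n)))
    (P : Finset X) (hP : (P : Set X) ⊆ Yinf)
    (hfixP : ∀ (n : ℕ) (x : X), x ∈ Yinf → (f n x = x ↔ x ∈ P))
    (hdisj1 : ∀ (n : ℕ) (x : X), x ∈ Yinf → x ∉ (P : Set X) →
      ∀ y ∈ Yinf, f n x ≠ y)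
    (hdisj2 : ∀ (n m : ℕ), n ≠ m → ∀ x ∈ Yinf, x ∉ (P : Set X) →
      ∀ y ∈ Yinf, f n x ≠ f m y)
    (hunif : ∀ ε : ℝ, 0 < ε → ∃ N : ℕ, ∀ n ≥ N, ∀ x ∈ Yinf, dist (f n x) x < ε)
    (p : X) (hpP : p ∈ P)
    (U' : Set X) (hU'sub : U' ⊆ Yinf) (hpU' : p ∈ U')
    (hU'open : ∃ V : Set X, IsOpen V ∧ U' = V ∩ Yinf)
    (hU'P : (P : Set X) ∩ U' = {p})
    (r' : X → ℝ → X)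
    (hr'cont : ContinuousOn (fun q : X × ℝ => r' q.1 q.2) (U' ×ˢ Icc (0:ℝ) 1))
    (hr'into : ∀ x ∈ U', ∀ t ∈ Icc (0:ℝ) 1, r' x t ∈ U')
    (hr'one : ∀ x ∈ U', r' x 1 = x)
    (hr'zero : ∀ x ∈ U', r' x 0 = p)
    (hr'p : ∀ t ∈ Icc (0:ℝ) 1, r' p t = p) :
    p ∈ U' ∪ ⋃ n, f n '' U' ∧
    IsOpen (U' ∪ ⋃ n, f n '' U') ∧
    ∃ r : X → ℝ → X,
      ContinuousOn (fun q : X × ℝ => r q.1 q.2) ((U' ∪ ⋃ n, f n '' U') ×ˢ Icc (0:ℝ) 1) ∧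
      (∀ x ∈ U' ∪ ⋃ n, f n '' U', ∀ t ∈ Icc (0:ℝ) 1, r x t ∈ U' ∪ ⋃ n, f n '' U') ∧
      (∀ x ∈ U' ∪ ⋃ n, f n '' U', r x 1 = x) ∧
      (∀ x ∈ U' ∪ ⋃ n, f n '' U', r x 0 = p) ∧
      (∀ x ∈ U', ∀ t ∈ Icc (0:ℝ) 1, r x t = r' x t) ∧
      (∀ (n : ℕ), ∀ x ∈ U', ∀ t ∈ Icc (0:ℝ) 1, r (f n x) t = f n (r' x t)) :=
  convergentYSpace_identification_point_retractible_nbhd_general X Yinf Y hcover hYinfCompact f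
    hmaps hembed P hP hfixP hdisj1 hdisj2 hunif p hpP U' hU'sub hpU' hU'open hU'P r' hr'cont hr'into
    hr'one hr'zero hr'p
end

section
/- Let X be the 'hyperbolas space': the subset of ℝ² consisting of the segments of the coordinate axes inside the disk of radius 10 together with, for each n ∈ ℕ, the four arcs {(x,y) : xy = ±1/n, ‖(x,y)‖ ≤ 10}. Then {(0,0)} has a neighbourhood inside the union of the two coordinate-axis segments that deformation retracts to (0,0) and is relatively open in the union of the two axis segments, but (0,0) has no neighbourhood that is open in X and deformation retracts in X onto {(0,0)}: every X-open neighbourhood of the origin contains points of some hyperbola branch that lie in a path component of the neighbourhood not containing (0,0). -/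
/-!
Scaling by `t ∈ [0, 1]` keeps the axes inside the disk, so it contracts the axes onto the
origin. On the other hand the product `x * y` is continuous on `X` and takes only the countably
many values `0, ±1/n`, so it is constant along every path in `X`; since the points
`(1/(n+1), 1/(n+1))` of the hyperbolas `x * y = 1/(n+1)^2` converge to the origin, every
neighbourhood of the origin contains points that no path in `X` joins to it.
-/

open Set

/-- The "hyperbolas space": the pieces of the coordinate axes inside the disk of radius 10,
together with the arcs of the hyperbolas `x·y = ±1/n` inside that disk. -/
def hyperbolasSpace : Set (ℝ × ℝ) :=
  {z | z.1 ^ 2 + z.2 ^ 2 ≤ 100 ∧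
    (z.1 = 0 ∨ z.2 = 0 ∨ ∃ n : ℕ, 0 < n ∧ (z.1 * z.2 = 1 / n ∨ z.1 * z.2 = -(1 / n)))}

/-- The origin, as a point of the hyperbolas space. -/
def hypOrigin : ↥hyperbolasSpace :=
  ⟨(0, 0), by constructor <;> norm_num [hyperbolasSpace]⟩

/-- The union of the two axis segments inside the hyperbolas space. -/
def hypAxes : Set ↥hyperbolasSpace := {z | (z : ℝ × ℝ).1 = 0 ∨ (z : ℝ × ℝ).2 = 0}

open Filter Topology

theorem Continuous.apply_eq_of_joined_of_countable_range {X Y : Type*} [TopologicalSpace X]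
    [MetricSpace Y] {f : X → Y} (hf : Continuous f) (hc : (range f).Countable) {x y : X}
    (h : Joined x y) : f x = f y := by
  obtain ⟨γ⟩ := h
  exact hc.isTotallyDisconnected _ (image_subset_range f _)
    ((isPreconnected_range γ.continuous).image f hf.continuousOn)
    ⟨x, ⟨0, γ.source⟩, rfl⟩ ⟨y, ⟨1, γ.target⟩, rfl⟩

theorem smul_mem_hyperbolasSpace {z : ℝ × ℝ} (hz : z ∈ hyperbolasSpace)
    (haxis : z.1 = 0 ∨ z.2 = 0) {t : ℝ} (ht : |t| ≤ 1) : t • z ∈ hyperbolasSpace := by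
  obtain ⟨hdisk, -⟩ := hz
  have ht2 : t ^ 2 ≤ 1 := (sq_le_one_iff_abs_le_one t).mpr ht
  refine ⟨?_, ?_⟩
  · calc (t • z).1 ^ 2 + (t • z).2 ^ 2 = t ^ 2 * (z.1 ^ 2 + z.2 ^ 2) := by
          simp only [Prod.smul_fst, Prod.smul_snd, smul_eq_mul, mul_pow, mul_add]
      _ ≤ 1 * 100 := by gcongr
      _ = 100 := one_mul _
  · rcases haxis with h | h <;> simp [h]

def axesContraction (z : ↥hypAxes) (t : unitInterval) : ↥hyperbolasSpace :=
  ⟨(t : ℝ) • (z : ↥hyperbolasSpace), smul_mem_hyperbolasSpace (z : ↥hyperbolasSpace).2 z.2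
    (abs_le.mpr ⟨by linarith [t.2.1], t.2.2⟩)⟩

theorem continuous_axesContraction :
    Continuous (fun q : ↥hypAxes × unitInterval => axesContraction q.1 q.2) :=
  Continuous.subtype_mk (by fun_prop) _

theorem axesContraction_mem_hypAxes (z : ↥hypAxes) (t : unitInterval) :
    axesContraction z t ∈ hypAxes := by
  rcases z.2 with h | h
  · exact Or.inl (by simp [axesContraction, h])
  · exact Or.inr (by simp [axesContraction, h])

theorem countable_range_hyperbolasSpace_mul :
    (range fun z : ↥hyperbolasSpace => (z : ℝ × ℝ).1 * (z : ℝ × ℝ).2).Countable := by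
  refine (((countable_range fun m : ℕ => 1 / (m : ℝ)).union
    (countable_range fun m : ℕ => -(1 / (m : ℝ)))).insert 0).mono ?_
  rintro _ ⟨⟨z, -, hz⟩, rfl⟩
  rcases hz with h | h | ⟨m, -, h | h⟩
  · simp [h]
  · simp [h]
  · exact Or.inr (Or.inl ⟨m, h.symm⟩)
  · exact Or.inr (Or.inr ⟨m, h.symm⟩)

theorem mul_eq_zero_of_joined_hypOrigin {z : ↥hyperbolasSpace} (h : Joined z hypOrigin) :
    (z : ℝ × ℝ).1 * (z : ℝ × ℝ).2 = 0 := by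
  have := (by fun_prop : Continuous fun z : ↥hyperbolasSpace => (z : ℝ × ℝ).1 * (z : ℝ × ℝ).2)
    |>.apply_eq_of_joined_of_countable_range countable_range_hyperbolasSpace_mul h
  simpa [hypOrigin] using this

noncomputable def hypDiag (n : ℕ) : ↥hyperbolasSpace :=
  ⟨(1 / (n + 1), 1 / (n + 1)), by
    have h0 : (0 : ℝ) ≤ 1 / (n + 1) := by positivity
    have h1 : (1 : ℝ) / (n + 1) ≤ 1 := div_le_one_of_le₀ (by simp) (by positivity)
    exact ⟨by nlinarith,
      Or.inr (Or.inr ⟨(n + 1) ^ 2, by positivity, Or.inl (by push_cast; field_simp)⟩)⟩⟩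

theorem tendsto_hypDiag : Tendsto hypDiag atTop (𝓝 hypOrigin) :=
  tendsto_subtype_rng.mpr <|
    tendsto_one_div_add_atTop_nhds_zero_nat.prodMk_nhds tendsto_one_div_add_atTop_nhds_zero_nat

theorem hypDiag_mul_ne_zero (n : ℕ) :
    ((hypDiag n : ℝ × ℝ)).1 * ((hypDiag n : ℝ × ℝ)).2 ≠ 0 := by
  simp only [hypDiag]
  positivity

theorem exists_not_joined_hypOrigin {V : Set ↥hyperbolasSpace} (hV : V ∈ 𝓝 hypOrigin) :
    ∃ z ∈ V, ¬ Joined z hypOrigin := by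
  obtain ⟨n, hn⟩ := (tendsto_hypDiag.eventually_mem hV).exists
  exact ⟨hypDiag n, hn, fun h => hypDiag_mul_ne_zero n (mul_eq_zero_of_joined_hypOrigin h)⟩

/-- In the hyperbolas space `X`, the origin has a neighbourhood inside the
union `A` of the two coordinate-axis segments which is relatively open in `A` and
deformation retracts onto the origin; but the origin possesses no neighbourhood which is
open in `X` and deformation retracts within `X` onto the origin. -/
theorem hyperbolasSpace_retractible_in_axes_but_not_in_X :
    -- (a) a relatively open neighbourhood of the origin in the axes, retractible to it
    (∃ U : Set ↥hyperbolasSpace, hypOrigin ∈ U ∧ U ⊆ hypAxes ∧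
      (∃ W : Set ↥hyperbolasSpace, IsOpen W ∧ U = W ∩ hypAxes) ∧
      ∃ H : ↥U → unitInterval → ↥hyperbolasSpace,
        Continuous (fun q : ↥U × unitInterval => H q.1 q.2) ∧
        (∀ x : ↥U, ∀ t : unitInterval, H x t ∈ U) ∧
        (∀ x : ↥U, H x 1 = (x : ↥hyperbolasSpace)) ∧
        (∀ x : ↥U, H x 0 = hypOrigin)) ∧
    -- (b) no X-open neighbourhood of the origin deformation retracts in X onto the origin
    ¬ ∃ V : Set ↥hyperbolasSpace, IsOpen V ∧ hypOrigin ∈ V ∧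
      ∃ H : ↥V → unitInterval → ↥hyperbolasSpace,
        Continuous (fun q : ↥V × unitInterval => H q.1 q.2) ∧
        (∀ x : ↥V, H x 1 = (x : ↥hyperbolasSpace)) ∧
        (∀ x : ↥V, H x 0 = hypOrigin) := by
  refine ⟨⟨hypAxes, Or.inl rfl, subset_rfl, ⟨univ, isOpen_univ, (univ_inter _).symm⟩,
    axesContraction, continuous_axesContraction, axesContraction_mem_hypAxes,
    fun z => Subtype.ext (one_smul ℝ _), fun z => Subtype.ext (zero_smul ℝ _)⟩, ?_⟩
  rintro ⟨V, hV, h0, H, hH, hH1, hH0⟩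
  obtain ⟨z, hzV, hz⟩ := exists_not_joined_hypOrigin (hV.mem_nhds h0)
  let γ : Path hypOrigin z :=
    ⟨⟨H ⟨z, hzV⟩, hH.comp (Continuous.prodMk_right _)⟩, hH0 _, hH1 _⟩
  exact hz ⟨γ.symm⟩
end
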